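/- arXiv:2508.19619 — 8 statements merged into one kernel-verified Lean document; each statement's English description precedes it below -/
import Mathlib

section
/- Every binary prefix normal word not consisting solely of 1s has a prefix normal parent: if w is prefix normal and contains at least one 0, then the word obtained from w by replacing the first occurrence of 0 with a 1 is also prefix normal. -/
/-- A binary word (list of booleans, `true` = letter 1) is prefix normal if every
factor has at most as many 1s as the prefix of the same length. -/
def prefixNormal (w : List Bool) : Prop :=
  ∀ v : List Bool, v <:+: w → v.count true ≤ (w.take v.length).count true

/-- The word chain of a permutation σ of positions (0-indexed): `pnChain σ 0 = 1^n`
and `pnChain σ (k+1)` flips position `σ k` of `pnChain σ k` from 1 to 0.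
(`pnChain σ k` corresponds to the paper's `c_σ[k+1]`.) -/
def pnChain {n : ℕ} (σ : Equiv.Perm (Fin n)) : ℕ → List Bool
  | 0 => List.replicate n true
  | k + 1 => if h : k < n then (pnChain σ k).set (σ ⟨k, h⟩) false else pnChain σ k

/-- σ is a prefix normal word chain generator iff every word of its chain is prefix normal. -/
def isPNGen {n : ℕ} (σ : Equiv.Perm (Fin n)) : Prop :=
  ∀ k ≤ n, prefixNormal (pnChain σ k)

/-!
Write `w = 1^i 0 t`, so the parent is `w' = 1^(i+1) t`. Every factor of `w'` differs from the
factor of `w` at the same position in at most one letter, so it has at most one more 1; and every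
prefix of `w'` of length greater than `i` has exactly one more 1 than the prefix of `w` of the
same length, while the prefixes of length at most `i` consist of 1s only.
-/

namespace List

variable {α : Type*} [BEq α]

theorem count_set_le_count_add_one (l : List α) (i : ℕ) (a b : α) :
    (l.set i a).count b ≤ l.count b + 1 := by
  rcases lt_or_ge i l.length with hi | hi
  · rw [count_set hi]
    split <;> split <;> omega
  · rw [set_eq_of_length_le hi]
    omega

theorem count_take_drop_set_le (l : List α) (i p ℓ : ℕ) (a b : α) :
    (((l.set i a).drop p).take ℓ).count b ≤ ((l.drop p).take ℓ).count b + 1 := by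
  rw [drop_set]
  split
  · omega
  · rw [take_set]
    exact count_set_le_count_add_one _ _ _ _

end List

theorem List.IsInfix.exists_take_drop_eq {α : Type*} {v w : List α} (h : v <:+: w) :
    ∃ p, (w.drop p).take v.length = v := by
  obtain ⟨s, u, rfl⟩ := h
  exact ⟨s.length, by simp⟩

theorem prefixNormal.count_take_drop_le {w : List Bool} (hw : prefixNormal w) (p ℓ : ℕ) :
    ((w.drop p).take ℓ).count true ≤ (w.take ℓ).count true :=
  calc ((w.drop p).take ℓ).count true
      ≤ (w.take ((w.drop p).take ℓ).length).count true :=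
        hw _ ((List.take_prefix _ _).isInfix.trans (List.drop_suffix _ _).isInfix)
    _ ≤ (w.take ℓ).count true :=
        ((List.take_prefix_take_left (by simp)).sublist).count_le _

theorem prefixNormal.set_true {w : List Bool} {i : ℕ} (hw : prefixNormal w)
    (hprefix : false ∉ w.take i) (hi : w[i]? = some false) :
    prefixNormal (w.set i true) := by
  intro v hv
  obtain ⟨p, hp⟩ := hv.exists_take_drop_eq
  have hi_lt : i < w.length := (List.getElem?_eq_some_iff.1 hi).1
  rcases le_or_gt v.length i with hle | hlt
  · have hlen : ((w.set i true).take v.length).length = v.length := by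
      simpa using hv.length_le
    have hones : false ∉ (w.set i true).take v.length := by
      rw [List.take_set_of_le hle]
      exact fun h ↦ hprefix ((List.take_prefix_take_left hle).subset h)
    have hcount : ((w.set i true).take v.length).count true = v.length := by
      refine (List.count_eq_length.2 fun b hb ↦ ?_).trans hlen
      cases b
      exacts [absurd hb hones, rfl]
    rw [hcount]
    exact List.count_le_length
  · have hparent : ((w.set i true).take v.length).count true
        = (w.take v.length).count true + 1 := by
      have : (w.take v.length)[i]? = some false := by simpa [hlt] using hi
      rw [List.take_set, List.count_set (by simp [hi_lt, hlt])]
      simp [(List.getElem?_eq_some_iff.1 this).2]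
    calc v.count true
        = (((w.set i true).drop p).take v.length).count true := by rw [hp]
      _ ≤ ((w.drop p).take v.length).count true + 1 := List.count_take_drop_set_le _ _ _ _ _ _
      _ ≤ (w.take v.length).count true + 1 := by grw [hw.count_take_drop_le]
      _ = ((w.set i true).take v.length).count true := hparent.symm

/-- Replacing the first occurrence of 0 in a prefix normal word by 1
yields a prefix normal word. -/
theorem prefixNormal_parent (w : List Bool) (hpn : prefixNormal w) (h0 : false ∈ w) :
    prefixNormal (w.set (w.idxOf false) true) :=
  hpn.set_true (fun h ↦ (lt_irrefl _) ((List.mem_take_iff_idxOf_lt h0).1 h))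
    (List.getElem?_eq_some_iff.2 ⟨List.idxOf_lt_length_of_mem h0, List.getElem_idxOf _⟩)
end

section
/- Every prefix normal binary word is contained in a prefix normal word chain: for every prefix normal word w of length n there exists a permutation σ of [n] such that every word of the chain c_σ is prefix normal and w = c_σ[i] for some i. -/
def onesIn (w : List Bool) (i l : ℕ) : ℕ := ((w.drop i).take l).count true

theorem onesIn_le (w : List Bool) (i l : ℕ) : onesIn w i l ≤ l :=
  List.count_le_length.trans (List.length_take_le _ _)

theorem onesIn_add (w : List Bool) (i l m : ℕ) :
    onesIn w i (l + m) = onesIn w i l + onesIn w (i + l) m := by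
  simp [onesIn, List.take_add, List.drop_drop, List.count_append]

theorem onesIn_mono (w : List Bool) (i : ℕ) {l m : ℕ} (h : l ≤ m) :
    onesIn w i l ≤ onesIn w i m := by
  obtain ⟨d, rfl⟩ := Nat.exists_eq_add_of_le h
  simp [onesIn_add]

variable {w : List Bool}

theorem prefixNormal_iff_onesIn : prefixNormal w ↔ ∀ i l, onesIn w i l ≤ onesIn w 0 l := by
  refine ⟨fun hw i l => ?_, fun hw v ⟨s, t, hv⟩ => ?_⟩
  · have hinfix : (w.drop i).take l <:+: w :=
      (List.take_prefix l _).isInfix.trans (List.drop_suffix i w).isInfix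
    refine (hw _ hinfix).trans (List.Sublist.count_le true ?_)
    simpa using List.take_sublist_take_left (l := w) (min_le_left l (w.length - i))
  · subst hv
    simpa [onesIn, List.take_take] using hw s.length v.length

theorem onesIn_replicate_true_append_drop (w : List Bool) (a i l : ℕ) :
    onesIn (List.replicate a true ++ w.drop a) i l
      = min l (a - i) + onesIn w (max a i) (l - (a - i)) := by
  simp [onesIn, List.drop_append, List.take_append, List.drop_drop, add_tsub_eq_max]

theorem onesIn_zero_le_min_add_onesIn (w : List Bool) (a l : ℕ) :
    onesIn w 0 l ≤ min l a + onesIn w a (l - a) := by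
  rcases le_or_gt l a with hla | hal
  · exact (onesIn_le w 0 l).trans (by omega)
  · have hsplit := onesIn_add w 0 a (l - a)
    rw [Nat.zero_add, Nat.add_sub_cancel' hal.le] at hsplit
    have := onesIn_le w 0 a
    omega

theorem prefixNormal.replicate_true_append_drop (hw : prefixNormal w) (a : ℕ) :
    prefixNormal (List.replicate a true ++ w.drop a) := by
  rw [prefixNormal_iff_onesIn] at hw ⊢
  intro i l
  simp only [onesIn_replicate_true_append_drop, Nat.sub_zero, max_eq_left (Nat.zero_le a)]
  rcases le_or_gt a i with hai | hia
  · simpa [Nat.sub_eq_zero_of_le hai, hai] using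
      (hw i l).trans (onesIn_zero_le_min_add_onesIn w a l)
  · rw [max_eq_left hia.le]
    rcases le_or_gt l a with hla | hal
    · have := onesIn_le w a (l - (a - i))
      omega
    · -- compared with the prefix, the factor trades `i` leading ones for `i` trailing letters
      have hsplit := onesIn_add w a (l - a) i
      have := onesIn_le w (a + (l - a)) i
      rw [show l - a + i = l - (a - i) by omega] at hsplit
      omega

theorem onesIn_take_append_replicate_false (w : List Bool) (b c i l : ℕ) :
    onesIn (w.take b ++ List.replicate c false) i l = onesIn w i (min l (b - i)) := by
  simp [onesIn, List.drop_append, List.take_append, List.count_replicate, List.drop_take,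
    List.take_take]

theorem prefixNormal.take_append_replicate_false (hw : prefixNormal w) (b c : ℕ) :
    prefixNormal (w.take b ++ List.replicate c false) := by
  rw [prefixNormal_iff_onesIn] at hw ⊢
  intro i l
  simp only [onesIn_take_append_replicate_false, Nat.sub_zero]
  exact (hw i _).trans (onesIn_mono w 0 (by omega))

theorem exists_iff_lt_of_antitone {P : ℕ → Prop} (hP : Antitone P) (n : ℕ) :
    ∃ a ≤ n, ∀ i < n, P i ↔ i < a := by
  induction n with
  | zero => exact ⟨0, le_rfl, by simp⟩
  | succ n ih =>
    by_cases hn : P n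
    · exact ⟨n + 1, le_rfl, fun i hi => iff_of_true (hP (by omega) hn) hi⟩
    · obtain ⟨a, han, ha⟩ := ih
      refine ⟨a, by omega, fun i hi => ?_⟩
      rcases Nat.lt_succ_iff_lt_or_eq.mp hi with hi | rfl
      · exact ha i hi
      · exact iff_of_false hn (by omega)

theorem List.ofFn_or_lt_eq_replicate_append_drop (w : List Bool) {a : ℕ} (ha : a ≤ w.length) :
    List.ofFn (fun i : Fin w.length => w[i] || decide (i.1 < a))
      = List.replicate a true ++ w.drop a := by
  refine List.ext_getElem (by simp; omega) fun i h₁ h₂ => ?_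
  simp only [List.getElem_ofFn, List.getElem_append, List.length_replicate, List.getElem_replicate,
    List.getElem_drop]
  split_ifs with h
  · simp [h]
  · simp [h, Nat.add_sub_cancel' (Nat.not_lt.mp h)]

theorem List.ofFn_and_lt_eq_take_append_replicate (w : List Bool) (b : ℕ) :
    List.ofFn (fun i : Fin w.length => w[i] && decide (i.1 < b))
      = w.take b ++ List.replicate (w.length - b) false := by
  refine List.ext_getElem (by simp; omega) fun i h₁ h₂ => ?_
  rw [List.length_ofFn] at h₁
  simp only [List.getElem_ofFn, List.getElem_append, List.length_take, lt_inf_iff,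
    List.getElem_take, List.getElem_replicate]
  split <;> simp_all

theorem prefixNormal.ofFn_or (hw : prefixNormal w) {P : ℕ → Prop} [DecidablePred P]
    (hP : Antitone P) : prefixNormal (List.ofFn fun i : Fin w.length => w[i] || decide (P i)) := by
  obtain ⟨a, ha, hPa⟩ := exists_iff_lt_of_antitone hP w.length
  simpa only [fun i : Fin w.length => hPa i i.2, List.ofFn_or_lt_eq_replicate_append_drop w ha]
    using hw.replicate_true_append_drop a

theorem prefixNormal.ofFn_and (hw : prefixNormal w) {P : ℕ → Prop} [DecidablePred P]
    (hP : Antitone P) : prefixNormal (List.ofFn fun i : Fin w.length => w[i] && decide (P i)) := by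
  obtain ⟨b, -, hPb⟩ := exists_iff_lt_of_antitone hP w.length
  simpa only [fun i : Fin w.length => hPb i i.2, List.ofFn_and_lt_eq_take_append_replicate]
    using hw.take_append_replicate_false b _

theorem pnChain_eq_ofFn {n : ℕ} (σ : Equiv.Perm (Fin n)) (k : ℕ) :
    pnChain σ k = List.ofFn fun i => decide (k ≤ σ.symm i) := by
  induction k with
  | zero => simp [pnChain]
  | succ k ih =>
    rw [pnChain, ih]
    split_ifs with hk
    · refine List.ext_getElem (by simp) fun i h₁ h₂ => ?_
      have hi : i < n := by simpa using h₂
      have hflip := (σ.eq_symm_apply (x := ⟨i, hi⟩) (y := ⟨k, hk⟩)).symm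
      simp only [Fin.ext_iff] at hflip
      simp only [List.getElem_set, List.getElem_ofFn, hflip]
      split_ifs with hik
      · simp [hik]
      · exact decide_eq_decide.mpr (by omega)
    · congr
      funext i
      have := (σ.symm i).2
      exact decide_eq_decide.mpr (by omega)

namespace List

variable {α : Type*} [BEq α]

def countFrom (a : α) (l : List α) (j : ℕ) : ℕ := (l.drop j).count a

variable {a : α} {l : List α}

@[simp]
theorem countFrom_zero : l.countFrom a 0 = l.count a := rfl

theorem countFrom_antitone : Antitone (l.countFrom a) := fun i j hij => by
  simpa [countFrom, List.drop_drop, Nat.add_sub_cancel' hij] using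
    (List.drop_sublist (j - i) (l.drop i)).count_le a

theorem countFrom_succ_lt [LawfulBEq α] {i j : ℕ} (hij : i ≤ j) (hj : j < l.length)
    (h : l[j] = a) :
    l.countFrom a (j + 1) < l.countFrom a i := by
  have hj_succ : l.countFrom a j = l.countFrom a (j + 1) + 1 := by
    simp [countFrom, List.drop_eq_getElem_cons hj, h]
  have := countFrom_antitone (l := l) (a := a) hij
  omega

end List

/-- Position `i` of `w` is flipped at step `flipRank w i`: first the zeros of `w` from right to
left, then its ones from right to left. -/
def flipRank (w : List Bool) (i : Fin w.length) : ℕ :=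
  if w[i] then w.count false + w.countFrom true (i + 1) else w.countFrom false (i + 1)

theorem flipRank_lt_count_false {i : Fin w.length} (h : w[i] = false) :
    flipRank w i < w.count false := by
  simpa [flipRank, h] using List.countFrom_succ_lt (Nat.zero_le i) i.2 h

theorem flipRank_lt_length (i : Fin w.length) : flipRank w i < w.length := by
  cases h : w[i]
  · exact (flipRank_lt_count_false h).trans_le List.count_le_length
  · have hlt := List.countFrom_succ_lt (Nat.zero_le i) i.2 h
    rw [List.countFrom_zero] at hlt
    have := w.count_true_add_count_false
    simp only [flipRank, h, ↓reduceIte]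
    omega

theorem flipRank_injective (w : List Bool) : Function.Injective (flipRank w) := by
  refine Function.Injective.of_lt_imp_ne fun i j hij => ?_
  have hlt {b : Bool} (hj : w[j] = b) : w.countFrom b (j + 1) < w.countFrom b (i + 1) :=
    List.countFrom_succ_lt hij j.2 hj
  cases hi : w[i] <;> cases hj : w[j]
  · simpa [flipRank, hi, hj] using (hlt hj).ne'
  · simpa [flipRank, hj] using ((flipRank_lt_count_false hi).trans_le le_self_add).ne
  · simpa [flipRank, hi] using ((flipRank_lt_count_false hj).trans_le le_self_add).ne'
  · simpa [flipRank, hi, hj] using (hlt hj).ne'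

noncomputable def flipOrder (w : List Bool) : Equiv.Perm (Fin w.length) :=
  (Equiv.ofBijective (fun i => (⟨flipRank w i, flipRank_lt_length i⟩ : Fin w.length))
    (Finite.injective_iff_bijective.mp fun _ _ h => flipRank_injective w (congrArg Fin.val h))).symm

theorem pnChain_flipOrder (w : List Bool) (k : ℕ) :
    pnChain (flipOrder w) k = List.ofFn fun i => decide (k ≤ flipRank w i) :=
  pnChain_eq_ofFn _ k

theorem decide_le_flipRank_of_le_count_false {k : ℕ} (hk : k ≤ w.count false)
    (i : Fin w.length) :
    decide (k ≤ flipRank w i) = (w[i] || decide (k ≤ w.countFrom false (i + 1))) := by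
  cases h : w[i]
  · simp [flipRank, h]
  · simpa [flipRank, h] using hk.trans le_self_add

theorem decide_le_flipRank_of_count_false_le {k : ℕ} (hk : w.count false ≤ k)
    (i : Fin w.length) :
    decide (k ≤ flipRank w i)
      = (w[i] && decide (k ≤ w.count false + w.countFrom true (i + 1))) := by
  cases h : w[i]
  · simpa using (flipRank_lt_count_false h).trans_le hk
  · simp [flipRank, h]

/-- Every prefix normal word is part of a prefix normal word chain. -/
theorem mem_pn_chain (w : List Bool) (hpn : prefixNormal w) :
    ∃ σ : Equiv.Perm (Fin w.length), isPNGen σ ∧ ∃ i ≤ w.length, pnChain σ i = w := by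
  refine ⟨flipOrder w, fun k _ => ?_, w.count false, List.count_le_length, ?_⟩
  · rw [pnChain_flipOrder]
    rcases le_total k (w.count false) with hk | hk
    · simp only [decide_le_flipRank_of_le_count_false hk]
      exact hpn.ofFn_or (P := fun j => k ≤ w.countFrom false (j + 1))
        fun i j hij h => h.trans (List.countFrom_antitone (by omega))
    · simp only [decide_le_flipRank_of_count_false_le hk]
      exact hpn.ofFn_and (P := fun j => k ≤ w.count false + w.countFrom true (j + 1))
        fun i j hij h => h.trans (Nat.add_le_add_left (List.countFrom_antitone (by omega)) _)
  · simp [pnChain_flipOrder, decide_le_flipRank_of_count_false_le le_rfl]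
end

section
/- If σ is a prefix normal word chain generator of length n, then σ(1) ≥ ⌈(n+1)/2⌉; that is, the first flipped position lies in the second half of the word. -/
/-!
The first word of the chain after `1ⁿ` is `1^p 0 1^(n-p-1)`, where `p = σ(1) - 1`. Its suffix
`1^(n-p-1)` consists of ones only, so prefix normality forces the prefix of the same length to
avoid the single `0`, i.e. `n - p - 1 ≤ p`.
-/

lemma List.replicate_set_false {n p : ℕ} (hp : p < n) :
    (List.replicate n true).set p false
      = List.replicate p true ++ false :: List.replicate (n - p - 1) true := by
  rw [List.set_eq_take_append_cons_drop, if_pos (by simpa using hp), List.take_replicate,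
    List.drop_replicate, Nat.min_eq_left hp.le, Nat.sub_sub]

lemma le_of_prefixNormal_replicate_set_false {n p : ℕ} (hp : p < n)
    (h : prefixNormal ((List.replicate n true).set p false)) : n - p - 1 ≤ p := by
  rw [List.replicate_set_false hp] at h
  by_contra! hlong
  have hsuffix := h (List.replicate (n - p - 1) true)
    ⟨List.replicate p true ++ [false], [], by simp⟩
  simp only [List.length_replicate] at hsuffix
  rw [List.take_append, List.take_replicate, Nat.min_eq_right hlong.le, List.length_replicate,
    List.take_cons (by omega), List.take_replicate] at hsuffix
  simp only [List.count_append, List.count_replicate_self, ne_eq, Bool.false_eq_true,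
    not_false_eq_true, List.count_cons_of_ne] at hsuffix
  omega

lemma pnChain_one {n : ℕ} (σ : Equiv.Perm (Fin n)) (hn : 0 < n) :
    pnChain σ 1 = (List.replicate n true).set (σ ⟨0, hn⟩) false := by
  simp [pnChain, hn]

/-- For a prefix normal word chain generator, the first flipped position (1-indexed)
is at least ⌈(n+1)/2⌉. -/
theorem pnGen_first_flip {n : ℕ} (hn : 1 ≤ n) (σ : Equiv.Perm (Fin n)) (h : isPNGen σ) :
    (n + 2) / 2 ≤ (σ ⟨0, by omega⟩ : ℕ) + 1 := by
  have hfirst := h 1 hn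
  rw [pnChain_one σ hn] at hfirst
  have htail := le_of_prefixNormal_replicate_set_false (σ ⟨0, hn⟩).isLt hfirst
  omega
end

section
/- Let σ be a prefix normal word chain generator of length n, j ∈ [n−1] with σ(j) > σ(j+1), and let σ' be obtained from σ by swapping positions j and j+1. Then σ' is a prefix normal word chain generator if and only if there is no factor v of w = c_σ[j] such that: v contains position σ(j) but not position σ(j+1) of w, σ(j+1) ≤ |v| < σ(j), and the number of 1s in v equals the number of 1s in the prefix of w of length |v|. -/
def factorOnes (w : List Bool) (s L : ℕ) : ℕ := ((w.drop s).take L).count true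

theorem factorOnes_set_of_lt_or_le {w : List Bool} {p s L : ℕ} (x : Bool)
    (h : p < s ∨ s + L ≤ p) : factorOnes (w.set p x) s L = factorOnes w s L := by
  rw [factorOnes, List.drop_set]
  split_ifs
  · rfl
  · rw [List.take_set, List.set_eq_of_length_le (by simp; omega), factorOnes]

theorem factorOnes_set_false_add_one {w : List Bool} {p s L : ℕ} (hp : w[p]? = some true)
    (hs : s ≤ p) (hL : p < s + L) : factorOnes (w.set p false) s L + 1 = factorOnes w s L := by
  obtain ⟨q, rfl⟩ := Nat.exists_eq_add_of_le hs
  have hq : q < ((w.drop s).take L).length := by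
    have := (List.getElem?_eq_some_iff.1 hp).1
    simp; omega
  have hvq : ((w.drop s).take L)[q] = true := by
    rw [List.getElem_take, List.getElem_drop]
    exact (List.getElem?_eq_some_iff.1 hp).2
  have hpos : 0 < ((w.drop s).take L).count true :=
    List.count_pos_iff.2 (hvq ▸ List.getElem_mem hq)
  rw [factorOnes, factorOnes, List.drop_set, if_neg (by omega), Nat.add_sub_cancel_left,
    List.take_set, List.count_set hq, hvq]
  simp only [BEq.rfl, ↓reduceIte, beq_true, Bool.false_eq_true, add_zero]
  omega

theorem factorOnes_set_false_le (w : List Bool) (p s L : ℕ) :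
    factorOnes (w.set p false) s L ≤ factorOnes w s L := by
  rw [factorOnes, factorOnes, List.drop_set]
  split_ifs
  · rfl
  · rw [List.take_set]
    by_cases hq : p - s < ((w.drop s).take L).length
    · rw [List.count_set hq]
      simp
    · rw [List.set_eq_of_length_le (by omega)]

theorem take_drop_append_append {α : Type*} {u₁ v u₂ : List α} :
    v = ((u₁ ++ v ++ u₂).drop u₁.length).take v.length := by
  rw [List.append_assoc, List.drop_left, List.take_left]

theorem prefixNormal_iff_factorOnes_le {w : List Bool} :
    prefixNormal w ↔ ∀ s L, s + L ≤ w.length → factorOnes w s L ≤ factorOnes w 0 L := by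
  constructor
  · intro hw s L hsL
    have hlen : ((w.drop s).take L).length = L := by simp; omega
    simpa [factorOnes, hlen] using
      hw _ ((List.take_prefix L _).isInfix.trans (List.drop_suffix s w).isInfix)
  · rintro hw v ⟨u₁, u₂, rfl⟩
    have := hw u₁.length v.length (by simp)
    rwa [factorOnes, ← take_drop_append_append] at this

theorem prefixNormal_set_false_iff {w : List Bool} {a b : ℕ} (hba : b < a)
    (ha : w[a]? = some true) (hb : w[b]? = some true) (hw : prefixNormal w)
    (hwab : prefixNormal ((w.set a false).set b false)) :
    prefixNormal (w.set b false) ↔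
      ¬ ∃ s L, s + L ≤ w.length ∧ (s ≤ a ∧ a < s + L) ∧ ¬ (s ≤ b ∧ b < s + L) ∧
        (b + 1 ≤ L ∧ L < a + 1) ∧ factorOnes w s L = factorOnes w 0 L := by
  rw [List.set_comm _ _ hba.ne'] at hwab
  rw [prefixNormal_iff_factorOnes_le] at hw hwab ⊢
  simp only [List.length_set] at hwab ⊢
  have hb_pre (L : ℕ) (hL : b < L) : factorOnes (w.set b false) 0 L + 1 = factorOnes w 0 L :=
    factorOnes_set_false_add_one hb (Nat.zero_le b) (by omega)
  constructor
  · rintro hw' ⟨s, L, hsL, -, hb_out, hbL, htight⟩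
    have hfac := hw' s L hsL
    rw [factorOnes_set_of_lt_or_le false (by omega)] at hfac
    have := hb_pre L (by omega)
    omega
  · intro hbad s L hsL
    by_contra! hgt
    have hu_fac := hwab s L hsL
    have hu_pre := factorOnes_set_false_le (w.set b false) a 0 L
    by_cases ha_in : s ≤ a ∧ a < s + L
    swap
    · rw [factorOnes_set_of_lt_or_le false (by omega)] at hu_fac
      omega
    have ha' : (w.set b false)[a]? = some true := by rwa [List.getElem?_set_ne hba.ne]
    have haL : L ≤ a := by
      by_contra! haL
      have := factorOnes_set_false_add_one ha' ha_in.1 ha_in.2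
      have := factorOnes_set_false_add_one (L := L) ha' (Nat.zero_le a) (by omega)
      omega
    have hw_fac := hw s L hsL
    have hbL : b < L := by
      by_contra! hbL
      rw [factorOnes_set_of_lt_or_le false (by omega : b < 0 ∨ 0 + L ≤ b)] at hgt
      have := factorOnes_set_false_le w b s L
      omega
    have hb_pre := hb_pre L hbL
    have hb_out : ¬ (s ≤ b ∧ b < s + L) := by
      rintro ⟨hsb, hbs⟩
      have := factorOnes_set_false_add_one hb hsb hbs
      omega
    have hb_fac : factorOnes (w.set b false) s L = factorOnes w s L :=
      factorOnes_set_of_lt_or_le false (by omega)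
    exact hbad ⟨s, L, hsL, ha_in, hb_out, ⟨hbL, by omega⟩, by omega⟩

theorem exists_append_append_iff {α : Type*} (w : List α) (P : ℕ → ℕ → List α → Prop) :
    (∃ u₁ v u₂, w = u₁ ++ v ++ u₂ ∧ P u₁.length v.length v) ↔
      ∃ s L, s + L ≤ w.length ∧ P s L ((w.drop s).take L) := by
  constructor
  · rintro ⟨u₁, v, u₂, rfl, hP⟩
    exact ⟨u₁.length, v.length, by simp, by rwa [← take_drop_append_append]⟩
  · rintro ⟨s, L, hsL, hP⟩
    refine ⟨w.take s, (w.drop s).take L, w.drop (s + L), ?_, ?_⟩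
    · rw [List.append_assoc, ← List.drop_drop, List.take_append_drop, List.take_append_drop]
    · have h1 : (w.take s).length = s := by simp; omega
      have h2 : ((w.drop s).take L).length = L := by simp; omega
      rwa [h1, h2]

section Chain

variable {n : ℕ}

theorem pnChain_succ (σ : Equiv.Perm (Fin n)) {k : ℕ} (hk : k < n) :
    pnChain σ (k + 1) = (pnChain σ k).set (σ ⟨k, hk⟩) false := by
  rw [pnChain, dif_pos hk]

theorem pnChain_getElem?_of_le (σ : Equiv.Perm (Fin n)) {k : ℕ} {i : Fin n} (hk : k ≤ i) :
    (pnChain σ k)[(σ i : ℕ)]? = some true := by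
  induction k with
  | zero => simp [pnChain]
  | succ k ih =>
    have hkn : k < n := by omega
    have hne : (σ ⟨k, hkn⟩ : ℕ) ≠ σ i := fun h =>
      absurd (congrArg Fin.val (σ.injective (Fin.val_injective h))) (by simp; omega)
    rw [pnChain_succ σ hkn, List.getElem?_set_ne hne]
    exact ih (by omega)

theorem pnChain_eq_of_eqOn {σ τ : Equiv.Perm (Fin n)} {m k : ℕ} (hmk : m ≤ k)
    (hm : pnChain σ m = pnChain τ m) (h : ∀ i : Fin n, m ≤ i → (i : ℕ) < k → σ i = τ i) :
    pnChain σ k = pnChain τ k := by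
  induction k, hmk using Nat.le_induction with
  | base => exact hm
  | succ k hmk ih =>
    have ih := ih fun i hi hik => h i hi (by omega)
    by_cases hk : k < n
    · rw [pnChain_succ σ hk, pnChain_succ τ hk, ih, h ⟨k, hk⟩ hmk (by simp)]
    · simp only [pnChain, hk, dif_neg, not_false_eq_true, ih]

end Chain

section AdjacentSwap

variable {n : ℕ} (σ : Equiv.Perm (Fin n)) {j : ℕ} (hj : j + 1 < n)

theorem pnChain_mul_swap_of_le {k : ℕ} (hk : k ≤ j) :
    pnChain (σ * Equiv.swap ⟨j, Nat.lt_of_succ_lt hj⟩ ⟨j + 1, hj⟩) k = pnChain σ k := by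
  refine pnChain_eq_of_eqOn (Nat.zero_le k) rfl fun i _ hik => ?_
  rw [Equiv.Perm.mul_apply, Equiv.swap_apply_of_ne_of_ne] <;> simp [Fin.ext_iff] <;> omega

theorem pnChain_mul_swap_succ :
    pnChain (σ * Equiv.swap ⟨j, Nat.lt_of_succ_lt hj⟩ ⟨j + 1, hj⟩) (j + 1) =
      (pnChain σ j).set (σ ⟨j + 1, hj⟩) false := by
  rw [pnChain_succ _ (by omega), pnChain_mul_swap_of_le σ hj le_rfl, Equiv.Perm.mul_apply,
    Equiv.swap_apply_left]

theorem pnChain_mul_swap_of_ge {k : ℕ} (hk : j + 2 ≤ k) :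
    pnChain (σ * Equiv.swap ⟨j, Nat.lt_of_succ_lt hj⟩ ⟨j + 1, hj⟩) k = pnChain σ k := by
  refine pnChain_eq_of_eqOn hk ?_ fun i hi _ => ?_
  · rw [pnChain_succ _ hj, pnChain_mul_swap_succ, pnChain_succ σ hj, pnChain_succ σ (by omega),
      Equiv.Perm.mul_apply, Equiv.swap_apply_right, List.set_comm]
    exact fun h => by simpa [Fin.ext_iff] using σ.injective (Fin.val_injective h)
  · rw [Equiv.Perm.mul_apply, Equiv.swap_apply_of_ne_of_ne] <;> simp [Fin.ext_iff] <;> omega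

theorem isPNGen_mul_swap_iff (hσ : isPNGen σ) :
    isPNGen (σ * Equiv.swap ⟨j, Nat.lt_of_succ_lt hj⟩ ⟨j + 1, hj⟩) ↔
      prefixNormal ((pnChain σ j).set (σ ⟨j + 1, hj⟩) false) := by
  rw [← pnChain_mul_swap_succ σ hj]
  refine ⟨fun h => h (j + 1) (by omega), fun h k hk => ?_⟩
  rcases lt_trichotomy k (j + 1) with hkj | rfl | hkj
  · rw [pnChain_mul_swap_of_le σ hj (by omega)]
    exact hσ k hk
  · exact h
  · rw [pnChain_mul_swap_of_ge σ hj hkj]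
    exact hσ k hk

end AdjacentSwap

/-- Swapping adjacent entries with the larger one first: the swapped sequence is a
prefix normal generator iff no factor `v` of `w = c_σ[j]` exists that contains
position `σ(j)` but not position `σ(j+1)`, has `σ(j+1) ≤ |v| < σ(j)` (1-indexed),
and has as many 1s as the prefix of `w` of length `|v|`. -/
theorem pnGen_swap_gt {n : ℕ} (σ : Equiv.Perm (Fin n)) (hσ : isPNGen σ)
    (j : ℕ) (hj : j + 1 < n)
    (hgt : σ ⟨j + 1, hj⟩ < σ ⟨j, by omega⟩) :
    isPNGen (σ * Equiv.swap ⟨j, by omega⟩ ⟨j + 1, hj⟩) ↔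
      ¬ ∃ u₁ v u₂ : List Bool,
        pnChain σ j = u₁ ++ v ++ u₂ ∧
        (u₁.length ≤ (σ ⟨j, by omega⟩ : ℕ) ∧
          (σ ⟨j, by omega⟩ : ℕ) < u₁.length + v.length) ∧
        ¬ (u₁.length ≤ (σ ⟨j + 1, hj⟩ : ℕ) ∧
          (σ ⟨j + 1, hj⟩ : ℕ) < u₁.length + v.length) ∧
        ((σ ⟨j + 1, hj⟩ : ℕ) + 1 ≤ v.length ∧ v.length < (σ ⟨j, by omega⟩ : ℕ) + 1) ∧
        v.count true = ((pnChain σ j).take v.length).count true := by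
  have hjn : j < n := by omega
  have hwab : prefixNormal (((pnChain σ j).set (σ ⟨j, hjn⟩) false).set (σ ⟨j + 1, hj⟩) false) := by
    rw [← pnChain_succ σ hjn, ← pnChain_succ σ hj]
    exact hσ (j + 2) hj
  rw [isPNGen_mul_swap_iff σ hj hσ, prefixNormal_set_false_iff hgt
    (pnChain_getElem?_of_le σ le_rfl) (pnChain_getElem?_of_le σ (Nat.le_succ j))
    (hσ j (by omega)) hwab]
  exact not_congr (exists_append_append_iff (pnChain σ j) fun s L v =>
    (s ≤ (σ ⟨j, hjn⟩ : ℕ) ∧ (σ ⟨j, hjn⟩ : ℕ) < s + L) ∧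
      ¬ (s ≤ (σ ⟨j + 1, hj⟩ : ℕ) ∧ (σ ⟨j + 1, hj⟩ : ℕ) < s + L) ∧
      ((σ ⟨j + 1, hj⟩ : ℕ) + 1 ≤ L ∧ L < (σ ⟨j, hjn⟩ : ℕ) + 1) ∧
      v.count true = ((pnChain σ j).take L).count true).symm
end

section
/- If a binary word w is prefix normal, then both 1w and w0 are prefix normal. -/
lemma count_take_mono (l : List Bool) {m n : ℕ} (h : m ≤ n) :
    (l.take m).count true ≤ (l.take n).count true := by
  have : l.take m = (l.take n).take m := by rw [List.take_take, min_eq_left h]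
  rw [this]
  exact ((l.take n).take_prefix m).sublist.count_le _


/-- If `w` is prefix normal, so are `1w` and `w0`. -/
theorem prefixNormal_cons_append (w : List Bool) (h : prefixNormal w) :
    prefixNormal (true :: w) ∧ prefixNormal (w ++ [false]) := by
  constructor
  · intro v hv
    rcases List.infix_cons_iff.mp hv with hp | hi
    · rw [← List.prefix_iff_eq_take.mp hp]
    · cases v with
      | nil => simp
      | cons b t =>
        have hb := h _ hi
        calc (b :: t).count true ≤ (w.take (b :: t).length).count true := hb
          _ ≤ 1 + (w.take t.length).count true := by
              rcases Nat.lt_or_ge t.length w.length with hl | hl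
              · rw [List.length_cons, List.take_succ]
                have h1 : (w[t.length]?.toList).count true ≤ 1 := by
                  cases w[t.length]? with
                  | none => simp
                  | some c => cases c <;> simp
                simp only [List.count_append]
                omega
              · rw [List.take_of_length_le (by simp; omega), List.take_of_length_le hl]
                omega
          _ = ((true :: w).take (b :: t).length).count true := by
              simp [List.count_cons]
              omega
  · intro v hv
    obtain ⟨s, t, hst⟩ := hv
    have key : v.count true ≤ (w.take v.length).count true := by
      cases t using List.reverseRecOn with
      | nil =>
        simp only [List.append_nil] at hst
        cases v using List.reverseRecOn with
        | nil => simp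
        | append_singleton v' b =>
          rw [← List.append_assoc] at hst
          have hb : b = false := by
            have := congrArg (·.getLast?) hst
            simpa using this
          subst hb
          have hw : s ++ v' = w := by
            have := congrArg (·.dropLast) hst
            simpa using this
          have hv' : v' <:+: w := ⟨s, [], by simp [hw]⟩
          have := h _ hv'
          calc (v' ++ [false]).count true = v'.count true := by simp
            _ ≤ (w.take v'.length).count true := this
            _ ≤ (w.take (v' ++ [false]).length).count true := by
                apply count_take_mono; simp
      | append_singleton t' b =>
        have hw : s ++ v ++ t' = w := by
          have := congrArg (·.dropLast) hst
          simpa using this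
        have hv' : v <:+: w := ⟨s, t', hw⟩
        exact h _ hv'
    calc v.count true ≤ (w.take v.length).count true := key
      _ ≤ ((w ++ [false]).take v.length).count true := by
          rw [List.take_append]
          simp [List.count_append]
end

section
/- For every n ∈ ℕ, the number of prefix normal words of length n equals the number of prefix normal words of length n+1 that end in 0. -/
lemma count_take_append_false (w : List Bool) (k : ℕ) :
    ((w ++ [false]).take k).count true = (w.take k).count true := by
  rw [List.take_append, List.count_append]
  have : ([false].take (k - w.length)).count true = 0 := by
    rcases k - w.length with _ | m <;> simp
  omega

lemma infix_append_singleton {v w : List Bool} {a : Bool} (h : v <:+: w ++ [a]) :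
    v <:+: w ∨ ∃ v', v = v' ++ [a] ∧ v' <:+ w := by
  obtain ⟨s, t, hst⟩ := h
  induction t using List.reverseRecOn with
  | nil =>
    simp only [List.append_nil] at hst
    induction v using List.reverseRecOn with
    | nil => exact Or.inl List.nil_infix
    | append_singleton v' x _ =>
      rw [← List.append_assoc] at hst
      obtain ⟨h1, h2⟩ := List.append_inj' hst rfl
      simp at h2
      exact Or.inr ⟨v', by rw [h2], ⟨s, h1⟩⟩
  | append_singleton t' x _ =>
    rw [show s ++ v ++ (t' ++ [x]) = (s ++ v ++ t') ++ [x] by simp] at hst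
    obtain ⟨h1, _⟩ := List.append_inj' hst rfl
    exact Or.inl ⟨s, t', h1⟩

lemma pn_append_false {w : List Bool} (hw : prefixNormal w) :
    prefixNormal (w ++ [false]) := by
  intro v hv
  rw [count_take_append_false]
  rcases infix_append_singleton hv with h | ⟨v', rfl, hv'⟩
  · exact hw v h
  · have h1 : v'.count true ≤ (w.take v'.length).count true := hw v' hv'.isInfix
    have h2 : (w.take v'.length).count true ≤ (w.take (v' ++ [false]).length).count true := by
      exact (List.take_isPrefix_take.mpr (Or.inl (by simp))).sublist.count_le _
    simpa using le_trans h1 h2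

lemma pn_of_append_false {w : List Bool} (hw : prefixNormal (w ++ [false])) :
    prefixNormal w := by
  intro v hv
  have := hw v (hv.trans ((List.prefix_append w [false]).isInfix))
  rwa [count_take_append_false] at this

lemma eq_dropLast_append {w : List Bool} {a : Bool} (h : w.getLast? = some a) :
    w = w.dropLast ++ [a] := by
  induction w using List.reverseRecOn with
  | nil => simp at h
  | append_singleton w' x _ => simp_all


/-- The number of prefix
normal words of length `n+1` ending in 0. -/
theorem card_pn_eq_card_pn_end_zero (n : ℕ) :
    Nat.card {w : List Bool // w.length = n ∧ prefixNormal w} =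
      Nat.card {w : List Bool // w.length = n + 1 ∧ prefixNormal w ∧
        w.getLast? = some false} := by
  apply Nat.card_congr
  refine ⟨fun w => ⟨w.1 ++ [false], by simp [w.2.1], pn_append_false w.2.2, by simp⟩,
    fun w => ⟨w.1.dropLast, ?_, ?_⟩, fun w => by simp, fun w => ?_⟩
  · have h := eq_dropLast_append w.2.2.2
    have hl := w.2.1
    simp [hl]
  · have h := eq_dropLast_append w.2.2.2
    exact pn_of_append_false (h ▸ w.2.2.1)
  · ext1
    exact (eq_dropLast_append w.2.2.2).symm
end

section
/- If w is a prefix normal binary palindrome containing at least one 0, then w1 is not prefix normal. -/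
namespace List

theorem exists_replicate_true_append_false_prefix {w : List Bool} (h : false ∈ w) :
    ∃ a, replicate a true ++ [false] <+: w := by
  induction w with
  | nil => cases h
  | cons b t ih =>
    cases b with
    | false => exact ⟨0, by simp⟩
    | true =>
      obtain ⟨a, ha⟩ := ih (by simpa using h)
      exact ⟨a + 1, by simpa [replicate_succ] using ha⟩

end List

theorem not_prefixNormal_append_true {w : List Bool} {a : ℕ}
    (hpre : List.replicate a true ++ [false] <+: w) (hsuf : List.replicate a true <:+ w) :
    ¬ prefixNormal (w ++ [true]) := by
  intro h
  have hfac : List.replicate (a + 1) true <:+: w ++ [true] := by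
    obtain ⟨t, rfl⟩ := hsuf
    exact ⟨t, [], by simp [List.replicate_succ']⟩
  have htake : (w ++ [true]).take (a + 1) = List.replicate a true ++ [false] := by
    obtain ⟨t, rfl⟩ := hpre
    simp [List.take_append]
  have hcount := h _ hfac
  simp [htake] at hcount

theorem palindrome_extension_critical_general (w : List Bool)
    (hpal : w.reverse = w) (h0 : false ∈ w) :
    ¬ prefixNormal (w ++ [true]) := by
  obtain ⟨a, hpre⟩ := List.exists_replicate_true_append_false_prefix h0
  have hsuf : List.replicate a true <:+ w := by
    simpa [hpal] using List.reverse_suffix.mpr ((List.prefix_append _ _).trans hpre)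
  exact not_prefixNormal_append_true hpre hsuf

/-- Appending 1 to a prefix normal palindrome containing a 0 destroys prefix normality. -/
theorem palindrome_extension_critical (w : List Bool) (hpn : prefixNormal w)
    (hpal : w.reverse = w) (h0 : false ∈ w) :
    ¬ prefixNormal (w ++ [true]) :=
  palindrome_extension_critical_general w hpal h0
end

section
/- Let w be a prefix normal binary word containing at least one 0 such that w1 is also prefix normal. Then w has a prefix normal parent v (a prefix normal word obtained from w by replacing one occurrence of 0 with 1) such that v1 is also prefix normal. -/
/-!
Flipping the first 0 of a prefix normal word keeps it prefix normal: a prefix ending before that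
0 consists of 1s only, a prefix containing it gains exactly one 1, and any factor gains at most
one 1. Applied to `w1`, whose first 0 is the first 0 of `w`, this gives the parent `v` of `w`
with `v1` prefix normal, and `v` is prefix normal as a prefix of `v1`.
-/

namespace List

variable {α : Type*} [BEq α]

theorem count_set_le_succ (l : List α) (i : ℕ) (a b : α) :
    (l.set i b).count a ≤ l.count a + 1 := by
  by_cases hi : i < l.length
  · rw [count_set hi]
    split_ifs <;> omega
  · rw [set_eq_of_length_le (by omega)]
    omega

theorem exists_infix_count_le_succ_of_infix_set {l u : List α} {i : ℕ} {b : α}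
    (hu : u <:+: l.set i b) (a : α) :
    ∃ u', u' <:+: l ∧ u'.length = u.length ∧ u.count a ≤ u'.count a + 1 := by
  obtain ⟨s, t, h⟩ := hu
  have hlen : s.length + u.length ≤ l.length := by
    have := congrArg length h
    simp only [length_append, length_set] at this
    omega
  have hu : ((l.set i b).drop s.length).take u.length = u := by simp [← h]
  refine ⟨(l.drop s.length).take u.length,
    (take_prefix _ _).isInfix.trans (drop_suffix _ _).isInfix,
    by simp only [length_take, length_drop]; omega, ?_⟩
  conv_lhs => rw [← hu, drop_set]
  split_ifs
  · exact Nat.le_succ _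
  · rw [take_set]
    exact count_set_le_succ ..

theorem count_true_take_of_le_idxOf_false {w : List Bool} {m : ℕ} (hm : m ≤ w.idxOf false) :
    (w.take m).count true = m := by
  have hmw : m ≤ w.length := hm.trans idxOf_le_length
  rw [count_eq_length.2, length_take_of_le hmw]
  intro b hb
  obtain ⟨n, hn, rfl⟩ := mem_iff_getElem.1 hb
  rw [length_take_of_le hmw] at hn
  simpa using not_of_lt_findIdx (lt_of_lt_of_le hn hm)

end List

theorem prefixNormal.of_append {x y : List Bool} (h : prefixNormal (x ++ y)) :
    prefixNormal x := by
  intro v hv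
  simpa [List.take_append_of_le_length hv.length_le] using
    h v (hv.trans (List.prefix_append x y).isInfix)

theorem prefixNormal.set_idxOf_false {w : List Bool} (h : prefixNormal w) :
    prefixNormal (w.set (w.idxOf false) true) := by
  intro u hu
  obtain ⟨u', hu', hlen, hcount⟩ := List.exists_infix_count_le_succ_of_infix_set hu true
  rw [List.take_set]
  rcases le_or_gt u.length (w.idxOf false) with hle | hlt
  · rw [List.set_eq_of_length_le ((List.length_take_le _ _).trans hle),
      List.count_true_take_of_le_idxOf_false hle]
    exact List.count_le_length
  · have hm : u.length ≤ w.length := by simpa using hu.length_le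
    have hi : w.idxOf false < (w.take u.length).length := by
      rwa [List.length_take_of_le hm]
    have hwi : (w.take u.length)[w.idxOf false] = false := by
      rw [List.getElem_take]
      exact List.idxOf_get (hlt.trans_le hm)
    calc u.count true ≤ u'.count true + 1 := hcount
      _ ≤ (w.take u.length).count true + 1 := by simpa [hlen] using h u' hu'
      _ = ((w.take u.length).set (w.idxOf false) true).count true := by
        rw [List.count_set hi, hwi]
        simp

theorem exists_parent_extension_general (w : List Bool)
    (h0 : false ∈ w) (hext : prefixNormal (w ++ [true])) :
    ∃ i : Fin w.length, w.get i = false ∧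
      prefixNormal (w.set i true) ∧ prefixNormal (w.set i true ++ [true]) := by
  have hi : w.idxOf false < w.length := List.idxOf_lt_length_iff.2 h0
  have key := hext.set_idxOf_false
  rw [List.idxOf_append_of_mem h0, List.set_append, if_pos hi] at key
  exact ⟨⟨_, hi⟩, List.idxOf_get hi, key.of_append, key⟩

/-- If `w1` is prefix normal (and `w` contains a 0), then `w` has a prefix normal
parent `v` such that `v1` is also prefix normal. -/
theorem exists_parent_extension (w : List Bool) (hpn : prefixNormal w)
    (h0 : false ∈ w) (hext : prefixNormal (w ++ [true])) :
    ∃ i : Fin w.length, w.get i = false ∧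
      prefixNormal (w.set i true) ∧ prefixNormal (w.set i true ++ [true]) :=
  exists_parent_extension_general w h0 hext
end
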